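/- arXiv:1406.7028 — 3 statements merged into one kernel-verified Lean document; each statement's English description precedes it below -/
import Mathlib

section
/- (Lemma 4.1) Let h : ℝ × P(ℝ) → ℝ be such that for every m ∈ P(ℝ) the function x ↦ h(x,m) is differentiable and convex, with derivative denoted h_x(·,m). Let (Ω, F, ℙ) be a probability space and ξ, ξ' square-integrable real random variables on it; assume h(ξ, law(ξ)), h(ξ', law(ξ')), h(ξ, law(ξ')), h(ξ', law(ξ)), h_x(ξ, law(ξ))·(ξ − ξ') and h_x(ξ', law(ξ'))·(ξ − ξ') are all integrable. If the Lasry–Lions monotonicity condition holds, i.e. E[h(ξ', law(ξ')) + h(ξ, law(ξ)) − h(ξ, law(ξ')) − h(ξ', law(ξ))] ≥ 0, then the weak monotonicity inequality holds: E[(h_x(ξ, law(ξ)) − h_x(ξ', law(ξ')))·(ξ − ξ')] ≥ 0. -/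
open MeasureTheory

/-- Gradient inequality for a convex differentiable function on ℝ. -/
lemma convex_grad_ineq {f : ℝ → ℝ} {f' : ℝ → ℝ}
    (hconv : ConvexOn ℝ Set.univ f)
    (hderiv : ∀ x, HasDerivAt f (f' x) x) (x y : ℝ) :
    f x - f y ≤ f' x * (x - y) := by
  rcases lt_trichotomy x y with hlt | heq | hgt
  · have := hconv.le_slope_of_hasDerivAt (Set.mem_univ x) (Set.mem_univ y) hlt (hderiv x)
    rw [slope_def_field] at this
    have hne : y - x > 0 := by linarith
    rw [le_div_iff₀ hne] at this
    nlinarith [this]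
  · simp [heq]
  · have := hconv.slope_le_of_hasDerivWithinAt_Iio (Set.mem_univ y) (Set.mem_univ x) hgt
      ((hderiv x).hasDerivWithinAt)
    rw [slope_def_field] at this
    have hne : x - y > 0 := by linarith
    rw [div_le_iff₀ hne] at this
    nlinarith [this]

/-- Lemma 4.1: if `h` is convex and differentiable in `x` and the Lasry–Lions
monotonicity inequality holds for square-integrable `ξ, ξ'`, then the weak monotonicity
inequality holds. -/
theorem weak_monotonicity_of_lasry_lions
    (h hx : ℝ → Measure ℝ → ℝ)
    (hconv : ∀ m : Measure ℝ, ConvexOn ℝ Set.univ (fun x => h x m))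
    (hderiv : ∀ (m : Measure ℝ) (x : ℝ), HasDerivAt (fun y => h y m) (hx x m) x)
    (Ω : Type*) (mΩ : MeasurableSpace Ω) (P : Measure Ω) (hP : IsProbabilityMeasure P)
    (ξ ξ' : Ω → ℝ) (hξ : Measurable ξ) (hξ' : Measurable ξ')
    (hsq : Integrable (fun ω => ξ ω ^ 2) P) (hsq' : Integrable (fun ω => ξ' ω ^ 2) P)
    (hi1 : Integrable (fun ω => h (ξ ω) (P.map ξ)) P)
    (hi2 : Integrable (fun ω => h (ξ' ω) (P.map ξ')) P)
    (hi3 : Integrable (fun ω => h (ξ ω) (P.map ξ')) P)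
    (hi4 : Integrable (fun ω => h (ξ' ω) (P.map ξ)) P)
    (hi5 : Integrable (fun ω => hx (ξ ω) (P.map ξ) * (ξ ω - ξ' ω)) P)
    (hi6 : Integrable (fun ω => hx (ξ' ω) (P.map ξ') * (ξ ω - ξ' ω)) P)
    (hLL : 0 ≤ ∫ ω, (h (ξ' ω) (P.map ξ') + h (ξ ω) (P.map ξ)
            - h (ξ ω) (P.map ξ') - h (ξ' ω) (P.map ξ)) ∂P) :
    0 ≤ ∫ ω, (hx (ξ ω) (P.map ξ) - hx (ξ' ω) (P.map ξ')) * (ξ ω - ξ' ω) ∂P := by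
  set μ := P.map ξ
  set μ' := P.map ξ'
  have hpt : ∀ ω, (h (ξ' ω) μ' + h (ξ ω) μ - h (ξ ω) μ' - h (ξ' ω) μ)
      ≤ (hx (ξ ω) μ - hx (ξ' ω) μ') * (ξ ω - ξ' ω) := by
    intro ω
    have h1 := convex_grad_ineq (hconv μ) (hderiv μ) (ξ ω) (ξ' ω)
    have h2 := convex_grad_ineq (hconv μ') (hderiv μ') (ξ' ω) (ξ ω)
    nlinarith [h1, h2]
  have hIntL : Integrable (fun ω => h (ξ' ω) μ' + h (ξ ω) μ - h (ξ ω) μ' - h (ξ' ω) μ) P :=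
    ((hi2.add hi1).sub hi3).sub hi4
  have hIntR : Integrable (fun ω => (hx (ξ ω) μ - hx (ξ' ω) μ') * (ξ ω - ξ' ω)) P := by
    have : (fun ω => (hx (ξ ω) μ - hx (ξ' ω) μ') * (ξ ω - ξ' ω))
        = fun ω => hx (ξ ω) μ * (ξ ω - ξ' ω) - hx (ξ' ω) μ' * (ξ ω - ξ' ω) := by
      funext ω; ring
    rw [this]; exact hi5.sub hi6
  calc (0 : ℝ) ≤ ∫ ω, (h (ξ' ω) μ' + h (ξ ω) μ - h (ξ ω) μ' - h (ξ' ω) μ) ∂P := hLL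
    _ ≤ ∫ ω, (hx (ξ ω) μ - hx (ξ' ω) μ') * (ξ ω - ξ' ω) ∂P :=
      integral_mono hIntL hIntR hpt
end

section
/- Define g : ℝ × P(ℝ) → ℝ by g(x,m) = (x − ∫ y dm(y))² for m with finite first moment. Then for every probability space (Ω, F, ℙ) and all square-integrable real random variables ξ, ξ' on it, E[g(ξ', law(ξ')) + g(ξ, law(ξ)) − g(ξ, law(ξ')) − g(ξ', law(ξ))] = −2·(E[ξ] − E[ξ'])². In particular, whenever E[ξ] ≠ E[ξ'] this quantity is strictly negative, so g fails the Lasry–Lions monotonicity condition, even though x ↦ g(x,m) is convex for each m. -/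
open MeasureTheory

/-- The terminal cost `g(x,m) = (x - ∫ y dm(y))²`. -/
noncomputable def gQuad (x : ℝ) (m : Measure ℝ) : ℝ := (x - ∫ y, y ∂m) ^ 2

/-- `g` is Lasry–Lions monotone iff this is nonnegative for all square-integrable `ξ, ξ'`. -/
noncomputable def lasryLionsGap {Ω : Type*} [MeasurableSpace Ω] (g : ℝ → Measure ℝ → ℝ)
    (P : Measure Ω) (ξ ξ' : Ω → ℝ) : ℝ :=
  ∫ ω, (g (ξ' ω) (P.map ξ') + g (ξ ω) (P.map ξ) - g (ξ ω) (P.map ξ') - g (ξ' ω) (P.map ξ)) ∂P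

lemma convexOn_gQuad (m : Measure ℝ) : ConvexOn ℝ Set.univ (gQuad · m) := by
  simpa only [gQuad, Function.comp_def, neg_add_eq_sub, Set.preimage_univ] using
    (Even.convexOn_pow (𝕜 := ℝ) even_two).translate_right (-∫ y, y ∂m)

section

variable {Ω : Type*} [MeasurableSpace Ω] {P : Measure Ω}

lemma integrable_of_integrable_sq [IsFiniteMeasure P] {f : Ω → ℝ}
    (hf : AEStronglyMeasurable f P) (hsq : Integrable (fun ω => f ω ^ 2) P) : Integrable f P :=
  ((memLp_two_iff_integrable_sq hf).2 hsq).integrable one_le_two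

lemma gQuad_map {ξ : Ω → ℝ} (hξ : AEMeasurable ξ P) (x : ℝ) :
    gQuad x (P.map ξ) = (x - ∫ ω, ξ ω ∂P) ^ 2 :=
  congrArg (fun c => (x - c) ^ 2) (integral_map hξ aestronglyMeasurable_id)

/-- Only the cross term `-2 x ∫ y dm(y)` of `gQuad` survives the differences, and it is
bilinear in the state and the mean, so the integrand is `2 (E ξ - E ξ') (ξ' - ξ)`. -/
lemma lasryLionsGap_gQuad {ξ ξ' : Ω → ℝ} (hξ : Integrable ξ P) (hξ' : Integrable ξ' P) :
    lasryLionsGap gQuad P ξ ξ' = -2 * ((∫ ω, ξ ω ∂P) - ∫ ω, ξ' ω ∂P) ^ 2 := by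
  set a := ∫ ω, ξ ω ∂P
  set b := ∫ ω, ξ' ω ∂P
  have hpointwise : ∀ ω, gQuad (ξ' ω) (P.map ξ') + gQuad (ξ ω) (P.map ξ)
      - gQuad (ξ ω) (P.map ξ') - gQuad (ξ' ω) (P.map ξ) = 2 * (a - b) * (ξ' ω - ξ ω) := by
    intro ω
    simp only [gQuad_map hξ.aemeasurable, gQuad_map hξ'.aemeasurable]
    ring
  calc lasryLionsGap gQuad P ξ ξ' = ∫ ω, 2 * (a - b) * (ξ' ω - ξ ω) ∂P :=
        integral_congr_ae (.of_forall hpointwise)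
    _ = 2 * (a - b) * (b - a) := by rw [integral_const_mul, integral_sub hξ' hξ]
    _ = -2 * (a - b) ^ 2 := by ring

lemma lasryLionsGap_gQuad_neg {ξ ξ' : Ω → ℝ} (hξ : Integrable ξ P) (hξ' : Integrable ξ' P)
    (hne : ∫ ω, ξ ω ∂P ≠ ∫ ω, ξ' ω ∂P) : lasryLionsGap gQuad P ξ ξ' < 0 := by
  rw [lasryLionsGap_gQuad hξ hξ']
  have := sq_pos_of_ne_zero (sub_ne_zero.2 hne)
  linarith

end

/-- for `g(x,m) = (x - ∫ y dm(y))²`, the Lasry–Lions monotonicity expression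
equals `-2(E[ξ] - E[ξ'])²`; in particular it is strictly negative when `E[ξ] ≠ E[ξ']`,
so `g` fails the Lasry–Lions monotonicity condition, even though `x ↦ g(x,m)` is convex. -/
theorem gQuad_fails_lasry_lions
    (Ω : Type*) (mΩ : MeasurableSpace Ω) (P : Measure Ω) (hP : IsProbabilityMeasure P)
    (ξ ξ' : Ω → ℝ) (hξ : Measurable ξ) (hξ' : Measurable ξ')
    (hsq : Integrable (fun ω => ξ ω ^ 2) P) (hsq' : Integrable (fun ω => ξ' ω ^ 2) P) :
    (∫ ω, (gQuad (ξ' ω) (P.map ξ') + gQuad (ξ ω) (P.map ξ)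
        - gQuad (ξ ω) (P.map ξ') - gQuad (ξ' ω) (P.map ξ)) ∂P
      = -2 * ((∫ ω, ξ ω ∂P) - ∫ ω, ξ' ω ∂P) ^ 2) ∧
    ((∫ ω, ξ ω ∂P) ≠ (∫ ω, ξ' ω ∂P) →
      ∫ ω, (gQuad (ξ' ω) (P.map ξ') + gQuad (ξ ω) (P.map ξ)
        - gQuad (ξ ω) (P.map ξ') - gQuad (ξ' ω) (P.map ξ)) ∂P < 0) ∧
    (∀ m : Measure ℝ, ConvexOn ℝ Set.univ (fun x => gQuad x m)) := by
  have hi : Integrable ξ P := integrable_of_integrable_sq hξ.aestronglyMeasurable hsq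
  have hi' : Integrable ξ' P := integrable_of_integrable_sq hξ'.aestronglyMeasurable hsq'
  exact ⟨lasryLionsGap_gQuad hi hi', lasryLionsGap_gQuad_neg hi hi', convexOn_gQuad⟩
end

section
/- (Weak monotonicity for the linear-quadratic MFG terminal cost) Let q, q̄, s be positive reals with q + q̄ ≥ s·q̄. For m ∈ P(ℝ) with finite first moment set g(x,m) = q x² + q̄ (x − s∫ y dm(y))², with x-derivative g_x(x,m) = 2qx + 2q̄(x − s∫ y dm(y)). Then for every probability space (Ω, F, ℙ) and all square-integrable real random variables ξ, ξ' on it, E[(g_x(ξ, law(ξ)) − g_x(ξ', law(ξ')))·(ξ − ξ')] ≥ 2(q + q̄ − s·q̄)·E[(ξ − ξ')²] ≥ 0. -/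
open MeasureTheory

/-- The `x`-derivative `g_x(x,m) = 2qx + 2q̄(x - s ∫ y dm(y))` of the linear-quadratic MFG
terminal cost `g(x,m) = qx² + q̄(x - s ∫ y dm(y))²`. -/
noncomputable def gxLQ (q qbar s x : ℝ) (m : Measure ℝ) : ℝ :=
  2 * q * x + 2 * qbar * (x - s * ∫ y, y ∂m)

/-! Expanding, `(g_x(ξ, law ξ) - g_x(ξ', law ξ'))(ξ - ξ')` integrates to
`2(q + q̄) E[(ξ - ξ')²] - 2 s q̄ (E[ξ - ξ'])²`, and Jensen's inequality
`(E[ξ - ξ'])² ≤ E[(ξ - ξ')²]` bounds the subtracted term by `2 s q̄ E[(ξ - ξ')²]`. -/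

theorem hasDerivAt_lq_cost (q qbar c x : ℝ) :
    HasDerivAt (fun z => q * z ^ 2 + qbar * (z - c) ^ 2)
      (2 * q * x + 2 * qbar * (x - c)) x := by
  have hsq (y : ℝ) : HasDerivAt (fun z : ℝ => z ^ 2) (2 * y) y := by
    simpa using hasDerivAt_pow 2 y
  refine (((hsq x).const_mul q).fun_add
    (((hsq (x - c)).comp_sub_const x c).const_mul qbar)).congr_deriv ?_
  ring

theorem gxLQ_sub_gxLQ (q qbar s x x' : ℝ) (m m' : Measure ℝ) :
    gxLQ q qbar s x m - gxLQ q qbar s x' m' =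
      2 * (q + qbar) * (x - x') - 2 * qbar * s * ((∫ y, y ∂m) - ∫ y, y ∂m') := by
  unfold gxLQ
  ring

theorem integral_id_map {Ω : Type*} {mΩ : MeasurableSpace Ω} {P : Measure Ω} {ξ : Ω → ℝ}
    (hξ : AEMeasurable ξ P) : ∫ y, y ∂(P.map ξ) = ∫ ω, ξ ω ∂P :=
  integral_map hξ aestronglyMeasurable_id

theorem sq_integral_le_integral_sq {Ω : Type*} {mΩ : MeasurableSpace Ω} {P : Measure Ω}
    [IsProbabilityMeasure P] {X : Ω → ℝ} (hX : MemLp X 2 P) :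
    (∫ ω, X ω ∂P) ^ 2 ≤ ∫ ω, X ω ^ 2 ∂P := by
  have hvar := ProbabilityTheory.variance_nonneg X P
  rw [ProbabilityTheory.variance_eq_sub hX] at hvar
  simpa only [Pi.pow_apply, sub_nonneg] using hvar

theorem integral_gxLQ_map_sub_mul_sub (q qbar s : ℝ) {Ω : Type*} {mΩ : MeasurableSpace Ω}
    {P : Measure Ω} {ξ ξ' : Ω → ℝ} (hξ : Integrable ξ P) (hξ' : Integrable ξ' P)
    (hsq : Integrable (fun ω => (ξ ω - ξ' ω) ^ 2) P) :
    ∫ ω, (gxLQ q qbar s (ξ ω) (P.map ξ) - gxLQ q qbar s (ξ' ω) (P.map ξ')) * (ξ ω - ξ' ω) ∂P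
      = 2 * (q + qbar) * ∫ ω, (ξ ω - ξ' ω) ^ 2 ∂P
        - 2 * qbar * s * (∫ ω, (ξ ω - ξ' ω) ∂P) ^ 2 := by
  have hmean : (∫ y, y ∂(P.map ξ)) - ∫ y, y ∂(P.map ξ') = ∫ ω, (ξ ω - ξ' ω) ∂P := by
    rw [integral_id_map hξ.aemeasurable, integral_id_map hξ'.aemeasurable,
      integral_sub hξ hξ']
  have hdiff : Integrable (fun ω => ξ ω - ξ' ω) P := hξ.sub hξ'
  simp_rw [gxLQ_sub_gxLQ, hmean]
  set D := ∫ ω, (ξ ω - ξ' ω) ∂P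
  calc _ = ∫ ω, (2 * (q + qbar) * (ξ ω - ξ' ω) ^ 2 - 2 * qbar * s * D * (ξ ω - ξ' ω)) ∂P := by
        congr 1 with ω
        ring
    _ = _ := by
        rw [integral_sub (hsq.const_mul _) (hdiff.const_mul _), integral_const_mul,
          integral_const_mul]
        ring

theorem linear_quadratic_weak_monotonicity_general
    (q qbar s : ℝ) (hqbar : 0 < qbar) (hs : 0 < s)
    (hqs : s * qbar ≤ q + qbar) :
    (∀ (x : ℝ) (m : Measure ℝ),
      HasDerivAt (fun z => q * z ^ 2 + qbar * (z - s * ∫ y, y ∂m) ^ 2) (gxLQ q qbar s x m) x) ∧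
    ∀ (Ω : Type*) (mΩ : MeasurableSpace Ω) (P : Measure Ω), IsProbabilityMeasure P →
      ∀ ξ ξ' : Ω → ℝ, Measurable ξ → Measurable ξ' →
        Integrable (fun ω => ξ ω ^ 2) P → Integrable (fun ω => ξ' ω ^ 2) P →
        (2 * (q + qbar - s * qbar) * ∫ ω, (ξ ω - ξ' ω) ^ 2 ∂P
          ≤ ∫ ω, (gxLQ q qbar s (ξ ω) (P.map ξ) - gxLQ q qbar s (ξ' ω) (P.map ξ'))
              * (ξ ω - ξ' ω) ∂P) ∧
        0 ≤ 2 * (q + qbar - s * qbar) * ∫ ω, (ξ ω - ξ' ω) ^ 2 ∂P := by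
  refine ⟨fun x m => hasDerivAt_lq_cost q qbar _ x, ?_⟩
  intro Ω _ P _ ξ ξ' hξ hξ' hξ2 hξ'2
  have hL2 : MemLp ξ 2 P := (memLp_two_iff_integrable_sq hξ.aestronglyMeasurable).2 hξ2
  have hL2' : MemLp ξ' 2 P := (memLp_two_iff_integrable_sq hξ'.aestronglyMeasurable).2 hξ'2
  have hdiff : MemLp (fun ω => ξ ω - ξ' ω) 2 P := hL2.sub hL2'
  have hjensen := sq_integral_le_integral_sq hdiff
  rw [integral_gxLQ_map_sub_mul_sub q qbar s (hL2.integrable one_le_two)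
    (hL2'.integrable one_le_two) hdiff.integrable_sq]
  have hsq_nonneg : 0 ≤ ∫ ω, (ξ ω - ξ' ω) ^ 2 ∂P := integral_nonneg fun ω => sq_nonneg _
  constructor
  · linarith [mul_le_mul_of_nonneg_left hjensen (by positivity : 0 ≤ 2 * qbar * s)]
  · exact mul_nonneg (by linarith) hsq_nonneg

/-- weak monotonicity for the linear-quadratic MFG terminal cost. -/
theorem linear_quadratic_weak_monotonicity
    (q qbar s : ℝ) (hq : 0 < q) (hqbar : 0 < qbar) (hs : 0 < s)
    (hqs : s * qbar ≤ q + qbar) :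
    (∀ (x : ℝ) (m : Measure ℝ),
      HasDerivAt (fun z => q * z ^ 2 + qbar * (z - s * ∫ y, y ∂m) ^ 2) (gxLQ q qbar s x m) x) ∧
    ∀ (Ω : Type*) (mΩ : MeasurableSpace Ω) (P : Measure Ω), IsProbabilityMeasure P →
      ∀ ξ ξ' : Ω → ℝ, Measurable ξ → Measurable ξ' →
        Integrable (fun ω => ξ ω ^ 2) P → Integrable (fun ω => ξ' ω ^ 2) P →
        (2 * (q + qbar - s * qbar) * ∫ ω, (ξ ω - ξ' ω) ^ 2 ∂P
          ≤ ∫ ω, (gxLQ q qbar s (ξ ω) (P.map ξ) - gxLQ q qbar s (ξ' ω) (P.map ξ'))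
              * (ξ ω - ξ' ω) ∂P) ∧
        0 ≤ 2 * (q + qbar - s * qbar) * ∫ ω, (ξ ω - ξ' ω) ^ 2 ∂P :=
  linear_quadratic_weak_monotonicity_general q qbar s hqbar hs hqs
end
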